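/- arXiv:1807.08797 — 2 statements merged into one kernel-verified Lean document; each statement's English description precedes it below -/
import Mathlib

section
/- For every signed permutation w ∈ W_n, the number of elements of the diagram D(w) equals the length ℓ(w); that is, #{(i,j) : -n ≤ i ≤ -1, -n ≤ j ≤ n, w(i) > j, w⁻¹(j) > i, w⁻¹(-j) > i} = #{(i,j) : 1 ≤ i < j ≤ n, w(i) > w(j)} + #{(i,j) : 1 ≤ i ≤ j ≤ n, w(-i) > w(j)}. -/
/-! ### Signed permutations, corners, patterns, and theta-triples -/

/-- `w` is a signed permutation: `w (-i) = -(w i)` for all `i`. -/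
def IsSignedPerm (w : Equiv.Perm ℤ) : Prop :=
  ∀ i : ℤ, w (-i) = -(w i)

/-- `w` belongs to the hyperoctahedral group `W n`: `w m = m` for all `m > n`. -/
def MemW (w : Equiv.Perm ℤ) (n : ℕ) : Prop :=
  ∀ m : ℤ, (n : ℤ) < m → w m = m

/-- The rank function `r_w(p, q) = #{i ∈ ℤ : i ≥ p and w i ≤ -q}`. -/
noncomputable def rankFn (w : Equiv.Perm ℤ) (p q : ℤ) : ℕ :=
  Set.ncard {i : ℤ | p ≤ i ∧ w i ≤ -q}

/-- `(p, q)` is a corner position of `w`: `p ≥ 1`,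
`w(-p) > q-1 ≥ w(-p+1)` and `w⁻¹(q-1) > -p ≥ w⁻¹(q)`,
excluding the pairs with `p = 1` and `q < 0`. -/
def IsCornerPos (w : Equiv.Perm ℤ) (p q : ℤ) : Prop :=
  1 ≤ p ∧ (q - 1 < w (-p) ∧ w (-p + 1) ≤ q - 1) ∧
    (-p < w⁻¹ (q - 1) ∧ w⁻¹ q ≤ -p) ∧ ¬(p = 1 ∧ q < 0)

/-- `(p, q)` belongs to the NE path `Ne(w)`: it is a corner position which is
minimal for the strict partial order `(p,q) < (p',q') ↔ p > p' ∧ q < q'`. -/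
def InNePath (w : Equiv.Perm ℤ) (p q : ℤ) : Prop :=
  IsCornerPos w p q ∧ ∀ p' q' : ℤ, IsCornerPos w p' q' → ¬(p < p' ∧ q' < q)

/-- `(p, q)` is an unessential corner position of `w`, i.e. `(p,q) ∈ U(w)`. -/
def IsUnessential (w : Equiv.Perm ℤ) (p q : ℤ) : Prop :=
  IsCornerPos w p q ∧
    ∃ p₁ q₁ p₂ q₂ p₃ q₃ : ℤ,
      InNePath w p₁ q₁ ∧ InNePath w p₂ q₂ ∧ InNePath w p₃ q₃ ∧
      p₁ = p ∧ q₁ < q ∧ q < 0 ∧ 0 < p₂ ∧ q₂ = -q + 1 ∧ p < p₃ ∧ q₃ < q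

/-- `w` contains the signed pattern `π`. -/
def ContainsPattern (w : Equiv.Perm ℤ) (π : List ℤ) : Prop :=
  ∃ idx : Fin π.length → ℤ,
    (∀ j, 1 ≤ idx j) ∧ (∀ j l, j < l → idx j < idx l) ∧
    (∀ j, 0 < π.get j ↔ 0 < w (idx j)) ∧
    (∀ j l, |π.get j| < |π.get l| ↔ |w (idx j)| < |w (idx l)|)

/-- `w` avoids the signed pattern `π`. -/
def AvoidsPattern (w : Equiv.Perm ℤ) (π : List ℤ) : Prop :=
  ¬ ContainsPattern w π

/-- The thirteen signed patterns of the main theorem. -/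
def thetaPatterns : List (List ℤ) :=
  [[-1, 3, 2], [-2, 3, 1], [-3, 2, 1], [-3, 2, -1],
   [2, 1, 4, 3], [2, -3, 4, -1], [-2, -3, 4, -1],
   [3, -4, 1, -2], [3, -4, -1, -2], [-3, -4, 1, -2], [-3, -4, -1, -2],
   [-4, 1, -2, 3], [-4, -1, -2, 3]]

/-- The index `a` with `q (a-1) > 0 > q a`, i.e. one plus the number of positive `q i`. -/
def thetaA (s : ℕ) (q : ℕ → ℤ) : ℕ :=
  1 + ((Finset.Icc 1 s).filter (fun i => 0 < q i)).card

/-- The index `R i`, the unique index with `q (R i) > -q i > q (R i + 1)`. -/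
def thetaR (s : ℕ) (q : ℕ → ℤ) (i : ℕ) : ℕ :=
  ((Finset.Icc 1 s).filter (fun j => -q i < q j)).card

/-- The index `L i`: the largest `j` with `R i + 1 ≤ j ≤ a - 1` and
`k j - k (R i + 1) ≥ q (R i + 1) - q j`. -/
def thetaL (s : ℕ) (k q : ℕ → ℤ) (i : ℕ) : ℕ :=
  ((Finset.Icc (thetaR s q i + 1) (thetaA s q - 1)).filter
    (fun j => q (thetaR s q i + 1) - q j ≤ k j - k (thetaR s q i + 1))).sup id

/-- A theta-triple `τ = (k, p, q)`.  The tuples are recorded as functions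
`ℕ → ℤ`, with only the values at indices `1, …, s` relevant, and the convention
`k 0 = 0`. -/
structure ThetaTriple where
  s : ℕ
  k : ℕ → ℤ
  p : ℕ → ℤ
  q : ℕ → ℤ
  hk0 : k 0 = 0
  hkmono : ∀ i, i < s → k i < k (i + 1)
  hpmono : ∀ i, 1 ≤ i → i < s → p (i + 1) ≤ p i
  hppos : 1 ≤ s → 0 < p s
  hqmono : ∀ i, 1 ≤ i → i < s → q (i + 1) ≤ q i
  A1 : ∀ i, 1 ≤ i → i ≤ s → q i ≠ 0
  A2 : ∀ i j, 1 ≤ i → i ≤ s → 1 ≤ j → j ≤ s → i ≠ j → q i ≠ -q j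
  A3 : 1 ≤ s → q s < 0 → 1 < p s
  B1 : ∀ i, 1 ≤ i → i + 1 < thetaA s q →
    k (i + 1) - k i < (p i - p (i + 1)) + (q i - q (i + 1))
  B2 : ∀ i, thetaA s q ≤ i → i < s →
    (k (i + 1) - k i) + (k (thetaR s q i) - k (thetaR s q (i + 1))) <
      (p i - p (i + 1)) + (q i - q (i + 1))
  B3 : thetaA s q ≤ s → k (thetaR s q s) + 1 < p s + q s + k s
  C1 : ∀ i, thetaA s q ≤ i → i ≤ s → k i - k (thetaR s q i) ≤ -q i
  C2 : ∀ i, thetaA s q ≤ i → i ≤ s → thetaR s q i + 1 < thetaA s q →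
    q (thetaL s k q i) + k (thetaL s k q i) - k (thetaR s q i) ≤ -q i

/-- The largest integer `x ≤ b` whose absolute value is not in `S`. -/
noncomputable def pickVal (S : Finset ℤ) (b : ℤ) : ℤ :=
  (((Finset.Icc (b - 2 * (S.card : ℤ) - 1) b).filter (fun x => |x| ∉ S)).max).unbotD 0

/-- The greedy decreasing list `x₁ > x₂ > ⋯ > x_m` of values: `x₁` is the largest
integer `≤ b` with unused absolute value, and each further `x` is the largest
integer below the previous one with fresh absolute value. -/
noncomputable def pickVals (S : Finset ℤ) (b : ℤ) : ℕ → List ℤ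
  | 0 => []
  | m + 1 =>
      let x := pickVal S b
      x :: pickVals (insert |x| S) (x - 1) m

/-- The least vacant position `≥ p` (positions in `F` are filled). -/
noncomputable def nextVacant (F : Finset ℤ) (p : ℤ) : ℤ :=
  (((Finset.Icc p (p + (F.card : ℤ))).filter (fun x => x ∉ F)).min).untopD 0

/-- The first `m` vacant positions `≥ p`, in increasing order. -/
noncomputable def pickPositions (F : Finset ℤ) (p : ℤ) : ℕ → List ℤ
  | 0 => []
  | m + 1 =>
      let x := nextVacant F p
      x :: pickPositions (insert x F) (x + 1) m

/-- One step of the construction algorithm: `st` is the list of placements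
`(position, value)` made so far, `pi` is the starting position, `b = -q i`,
and `m = k i - k (i-1)` is the number of values to place.  The `m` greedily
chosen values are placed, in increasing order, at the first `m` vacant
positions `≥ pi`. -/
noncomputable def stepPlace (st : List (ℤ × ℤ)) (pi b : ℤ) (m : ℕ) : List (ℤ × ℤ) :=
  let F : Finset ℤ := (st.map Prod.fst).toFinset
  let S : Finset ℤ := (st.map (fun pv => |pv.2|)).toFinset
  (st ++ (pickPositions F pi m).zip (pickVals S b m).reverse)

/-- Steps `1, …, s` of the construction algorithm for a theta-triple. -/
noncomputable def ThetaTriple.run (τ : ThetaTriple) : List (ℤ × ℤ) :=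
  (List.range τ.s).foldl
    (fun st i =>
      stepPlace st (τ.p (i + 1)) (-(τ.q (i + 1))) ((τ.k (i + 1) - τ.k i).toNat))
    []

/-- A sufficiently large `n` for the construction of `w(τ)`. -/
def ThetaTriple.bigN (τ : ThetaTriple) : ℤ :=
  |τ.p 1| + |τ.q 1| + |τ.q τ.s| + 4 * |τ.k τ.s| + 4

/-- The final step: fill every remaining vacant position among `1, …, n`,
in increasing order, with the smallest unused positive integers. -/
noncomputable def finalStep (st : List (ℤ × ℤ)) (n : ℤ) : List (ℤ × ℤ) :=
  let F : Finset ℤ := (st.map Prod.fst).toFinset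
  let S : Finset ℤ := (st.map (fun pv => |pv.2|)).toFinset
  let P : List ℤ := ((Finset.Icc 1 n).filter (fun x => x ∉ F)).sort (· ≤ ·)
  let V : List ℤ := ((Finset.Icc 1 (n + (S.card : ℤ))).filter (fun x => x ∉ S)).sort (· ≤ ·)
  st ++ P.zip V

/-- The value of `w(τ)` at a positive position `i`. -/
noncomputable def ThetaTriple.posVal (τ : ThetaTriple) (i : ℤ) : ℤ :=
  (((finalStep τ.run τ.bigN).find? (fun pv => pv.1 == i)).getD (i, i)).2

/-- The signed permutation `w(τ)` associated to a theta-triple, as a function. -/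
noncomputable def ThetaTriple.wfun (τ : ThetaTriple) : ℤ → ℤ := fun i =>
  if 0 < i then τ.posVal i else if i < 0 then -(τ.posVal (-i)) else 0

/-- `w` is theta-vexillary: `w = w(τ)` for some theta-triple `τ`. -/
def IsThetaVexillary (w : Equiv.Perm ℤ) : Prop :=
  ∃ τ : ThetaTriple, ∀ i : ℤ, w i = τ.wfun i

/-- `(p, q)` is an optional corner position of `w = w(τ)`. -/
def IsOptional (τ : ThetaTriple) (w : Equiv.Perm ℤ) (p q : ℤ) : Prop :=
  IsCornerPos w p q ∧
    (¬ ∃ i : ℕ, 1 ≤ i ∧ i ≤ τ.s ∧ p = τ.p i ∧ q = τ.q i) ∧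
    ∃ i j : ℕ, thetaA τ.s τ.q ≤ i ∧ i ≤ τ.s ∧ 1 ≤ j ∧ j < thetaA τ.s τ.q ∧
      p = τ.p i ∧ q = -τ.q j + 1 ∧ (1 < i → q ≤ τ.q (i - 1)) ∧ τ.q i < q

/-- The number of boxes of the diagram `D(w)` equals the
length `ℓ(w)` of the signed permutation `w ∈ W n`. -/
theorem card_diagram_eq_length
    (w : Equiv.Perm ℤ) (hsp : IsSignedPerm w) (n : ℕ) (hW : MemW w n) :
    Set.ncard {ij : ℤ × ℤ | -(n : ℤ) ≤ ij.1 ∧ ij.1 ≤ -1 ∧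
        -(n : ℤ) ≤ ij.2 ∧ ij.2 ≤ (n : ℤ) ∧
        ij.2 < w ij.1 ∧ ij.1 < w⁻¹ ij.2 ∧ ij.1 < w⁻¹ (-ij.2)} =
      Set.ncard {ij : ℤ × ℤ | 1 ≤ ij.1 ∧ ij.1 < ij.2 ∧ ij.2 ≤ (n : ℤ) ∧
          w ij.2 < w ij.1} +
        Set.ncard {ij : ℤ × ℤ | 1 ≤ ij.1 ∧ ij.1 ≤ ij.2 ∧ ij.2 ≤ (n : ℤ) ∧
          w ij.2 < w (-ij.1)} := by
  classical
  have hw0 : w 0 = 0 := by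
    have h := hsp 0
    simp at h
    omega
  have hinv : ∀ x : ℤ, w⁻¹ (-x) = -(w⁻¹ x) := by
    intro x
    apply w.injective
    rw [hsp (w⁻¹ x)]
    simp
  have hbd : ∀ c : ℤ, -(n : ℤ) ≤ c → c ≤ (n : ℤ) → -(n : ℤ) ≤ w c ∧ w c ≤ (n : ℤ) := by
    intro c h1 h2
    constructor
    · by_contra h
      push_neg at h
      have h3 : (n : ℤ) < -(w c) := by omega
      have h4 := hW _ h3
      rw [hsp (w c)] at h4
      have h5 : w (w c) = w c := by omega
      have := w.injective h5
      omega
    · by_contra h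
      push_neg at h
      have h4 := hW _ h
      have := w.injective h4
      omega
  set D : Set (ℤ × ℤ) := {ij : ℤ × ℤ | -(n : ℤ) ≤ ij.1 ∧ ij.1 ≤ -1 ∧
        -(n : ℤ) ≤ ij.2 ∧ ij.2 ≤ (n : ℤ) ∧
        ij.2 < w ij.1 ∧ ij.1 < w⁻¹ ij.2 ∧ ij.1 < w⁻¹ (-ij.2)} with hD
  set S1 : Set (ℤ × ℤ) := {ij : ℤ × ℤ | 1 ≤ ij.1 ∧ ij.1 < ij.2 ∧ ij.2 ≤ (n : ℤ) ∧
          w ij.2 < w ij.1} with hS1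
  set S2 : Set (ℤ × ℤ) := {ij : ℤ × ℤ | 1 ≤ ij.1 ∧ ij.1 ≤ ij.2 ∧ ij.2 ≤ (n : ℤ) ∧
          w ij.2 < w (-ij.1)} with hS2
  set T : Set (ℤ × ℤ) := {p : ℤ × ℤ | 1 ≤ p.1 ∧ p.1 ≤ (n : ℤ) ∧ -p.1 < p.2 ∧
      p.2 < p.1 ∧ w p.1 < w p.2} with hT
  -- the box containing everything
  have hbox : ((Set.Icc (-(n:ℤ)) (n:ℤ)) ×ˢ (Set.Icc (-(n:ℤ)) (n:ℤ))).Finite :=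
    (Set.finite_Icc _ _).prod (Set.finite_Icc _ _)
  have hTfin : T.Finite := by
    apply hbox.subset
    rintro ⟨a, c⟩ ⟨h1, h2, h3, h4, _⟩
    exact ⟨⟨by omega, by omega⟩, ⟨by omega, by omega⟩⟩
  have hDfin : D.Finite := by
    apply hbox.subset
    rintro ⟨i, j⟩ ⟨h1, h2, h3, h4, _⟩
    exact ⟨⟨by omega, by omega⟩, ⟨by omega, by omega⟩⟩
  -- step 1 : D ≃ T via g
  have hginj : Function.Injective (fun p : ℤ × ℤ => ((-p.1, w⁻¹ (-p.2)) : ℤ × ℤ)) := by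
    rintro ⟨a, b⟩ ⟨c, d⟩ h
    simp only [Prod.mk.injEq] at h
    obtain ⟨h1, h2⟩ := h
    have := w⁻¹.injective h2
    simp only [Prod.mk.injEq]
    omega
  have hTD : T = (fun p : ℤ × ℤ => ((-p.1, w⁻¹ (-p.2)) : ℤ × ℤ)) '' D := by
    ext ⟨a, c⟩
    simp only [hT, hD, Set.mem_image, Set.mem_setOf_eq, Prod.mk.injEq, Prod.exists]
    constructor
    · rintro ⟨h1, h2, h3, h4, h5⟩
      refine ⟨-a, -(w c), ⟨by omega, by omega, ?_, ?_, ?_, ?_, ?_⟩, by omega, ?_⟩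
      · have := (hbd c (by omega) (by omega)).2; omega
      · have := (hbd c (by omega) (by omega)).1; omega
      · rw [hsp a]; omega
      · rw [hinv]
        have hc : w⁻¹ (w c) = c := by simp
        omega
      · rw [neg_neg]
        have hc : w⁻¹ (w c) = c := by simp
        omega
      · rw [neg_neg]
        simp
    · rintro ⟨i, j, ⟨h1, h2, h3, h4, h5, h6, h7⟩, ha, hc⟩
      subst ha hc
      refine ⟨by omega, by omega, ?_, ?_, ?_⟩
      · omega
      · rw [hinv]
        have := hinv j
        omega
      · have e1 : w (w⁻¹ (-j)) = -j := by simp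
        have e2 : w (-i) = -(w i) := by
          have := hsp i
          simpa using this
        omega
  have hcard1 : D.ncard = T.ncard := by
    rw [hTD, Set.ncard_image_of_injective _ hginj]
  -- step 2 : split T
  set Tp : Set (ℤ × ℤ) := {p ∈ T | 0 < p.2} with hTp
  set Tm : Set (ℤ × ℤ) := {p ∈ T | p.2 ≤ 0} with hTm
  have hsplit : T = Tp ∪ Tm := by
    ext p
    simp only [hTp, hTm, Set.mem_union, Set.mem_setOf_eq, Set.mem_sep_iff]
    constructor
    · intro h
      rcases le_or_gt p.2 0 with h' | h'
      · exact Or.inr ⟨h, h'⟩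
      · exact Or.inl ⟨h, h'⟩
    · rintro (⟨h, _⟩ | ⟨h, _⟩) <;> exact h
  have hdisj : Disjoint Tp Tm := by
    rw [Set.disjoint_left]
    rintro p ⟨_, h1⟩ ⟨_, h2⟩
    omega
  have hTpfin : Tp.Finite := hTfin.subset (fun p hp => hp.1)
  have hTmfin : Tm.Finite := hTfin.subset (fun p hp => hp.1)
  have hcard2 : T.ncard = Tp.ncard + Tm.ncard := by
    rw [hsplit, Set.ncard_union_eq hdisj hTpfin hTmfin]
  -- step 3 : S1 ≃ Tp via swap
  have hS1Tp : S1 = (fun p : ℤ × ℤ => ((p.2, p.1) : ℤ × ℤ)) '' Tp := by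
    ext ⟨i, j⟩
    simp only [hS1, hTp, hT, Set.mem_image, Set.mem_setOf_eq, Set.mem_sep_iff,
      Prod.mk.injEq, Prod.exists]
    constructor
    · rintro ⟨h1, h2, h3, h4⟩
      exact ⟨j, i, ⟨⟨by omega, by omega, by omega, by omega, h4⟩, by omega⟩, rfl, rfl⟩
    · rintro ⟨a, c, ⟨⟨h1, h2, h3, h4, h5⟩, h6⟩, hi, hj⟩
      subst hi hj
      exact ⟨by omega, by omega, by omega, h5⟩
  have hcard3 : S1.ncard = Tp.ncard := by
    rw [hS1Tp, Set.ncard_image_of_injective]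
    rintro ⟨a, b⟩ ⟨c, d⟩ h
    simp only [Prod.mk.injEq] at h ⊢
    omega
  -- step 4 : S2 ≃ Tm via h
  set f : ℤ × ℤ → ℤ × ℤ := fun p => (if p.2 = 0 then p.1 else -p.2, p.1) with hf
  have hS2Tm : S2 = f '' Tm := by
    ext ⟨i, j⟩
    simp only [hS2, hTm, hT, hf, Set.mem_image, Set.mem_setOf_eq, Set.mem_sep_iff,
      Prod.mk.injEq, Prod.exists]
    constructor
    · rintro ⟨h1, h2, h3, h4⟩
      rcases eq_or_lt_of_le h2 with heq | hlt
      · -- i = j, take (i, 0)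
        subst heq
        have hwneg : w i < 0 := by
          have := hsp i
          omega
        refine ⟨i, 0, ⟨⟨by omega, h3, by omega, by omega, ?_⟩, le_refl 0⟩, ?_, rfl⟩
        · rw [hw0]; omega
        · simp
      · -- i < j, take (j, -i)
        refine ⟨j, -i, ⟨⟨by omega, h3, by omega, by omega, h4⟩, by omega⟩, ?_, rfl⟩
        have : ¬(-i = 0) := by omega
        simp [this]
    · rintro ⟨a, c, ⟨⟨h1, h2, h3, h4, h5⟩, h6⟩, hi, hj⟩
      subst hj
      rcases eq_or_lt_of_le h6 with hc0 | hcneg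
      · -- c = 0
        subst hc0
        rw [hw0] at h5
        simp at hi
        subst hi
        have hwi := hsp a
        exact ⟨h1, le_refl _, h2, by omega⟩
      · -- c < 0
        have hci : i = -c := by rw [← hi]; simp [show ¬(c = 0) by omega]
        subst hci
        rw [neg_neg]
        exact ⟨by omega, by omega, h2, h5⟩
  have hfinj : Set.InjOn f Tm := by
    rintro ⟨a, c⟩ ⟨⟨h1, h2, h3, h4, h5⟩, h6⟩ ⟨a', c'⟩ ⟨⟨h1', h2', h3', h4', h5'⟩, h6'⟩ heq
    simp only [hf, Prod.mk.injEq] at heq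
    obtain ⟨he1, he2⟩ := heq
    subst he2
    have hcc : c = c' := by
      by_cases hc : c = 0 <;> by_cases hc' : c' = 0 <;> simp [hc, hc'] at he1 <;> omega
    rw [hcc]
  have hcard4 : S2.ncard = Tm.ncard := by
    rw [hS2Tm, Set.ncard_image_of_injOn hfinj]
  omega
end

section
/- Let w be a signed permutation that avoids the thirteen signed patterns [-1,3,2], [-2,3,1], [-3,2,1], [-3,2,-1], [2,1,4,3], [2,-3,4,-1], [-2,-3,4,-1], [3,-4,1,-2], [3,-4,-1,-2], [-3,-4,1,-2], [-3,-4,-1,-2], [-4,1,-2,3], [-4,-1,-2,3]. Then there do not exist corner positions (p,q) and (p',q') of w with p' > p ≥ 1 and q > q' > 0. -/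
lemma contains3 (w : Equiv.Perm ℤ) (a b c i1 i2 i3 : ℤ)
    (h1 : 1 ≤ i1) (h12 : i1 < i2) (h23 : i2 < i3)
    (s1 : 0 < a ↔ 0 < w i1) (s2 : 0 < b ↔ 0 < w i2) (s3 : 0 < c ↔ 0 < w i3)
    (t12 : |a| < |b| ↔ |w i1| < |w i2|)
    (t13 : |a| < |c| ↔ |w i1| < |w i3|)
    (t23 : |b| < |c| ↔ |w i2| < |w i3|)
    (t21 : |b| < |a| ↔ |w i2| < |w i1|)
    (t31 : |c| < |a| ↔ |w i3| < |w i1|)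
    (t32 : |c| < |b| ↔ |w i3| < |w i2|) :
    ContainsPattern w [a, b, c] := by
  refine ⟨fun j => ![i1, i2, i3] j, ?_, ?_, ?_, ?_⟩
  · intro j; fin_cases j <;> simp <;> omega
  · intro j l hjl; fin_cases j <;> fin_cases l <;> simp_all <;> omega
  · intro j; fin_cases j <;> simpa using ‹_›
  · intro j l; fin_cases j <;> fin_cases l <;> simp_all

lemma contains4 (w : Equiv.Perm ℤ) (a b c d i1 i2 i3 i4 : ℤ)
    (h1 : 1 ≤ i1) (h12 : i1 < i2) (h23 : i2 < i3) (h34 : i3 < i4)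
    (s1 : 0 < a ↔ 0 < w i1) (s2 : 0 < b ↔ 0 < w i2)
    (s3 : 0 < c ↔ 0 < w i3) (s4 : 0 < d ↔ 0 < w i4)
    (t12 : |a| < |b| ↔ |w i1| < |w i2|)
    (t13 : |a| < |c| ↔ |w i1| < |w i3|)
    (t14 : |a| < |d| ↔ |w i1| < |w i4|)
    (t23 : |b| < |c| ↔ |w i2| < |w i3|)
    (t24 : |b| < |d| ↔ |w i2| < |w i4|)
    (t34 : |c| < |d| ↔ |w i3| < |w i4|)
    (t21 : |b| < |a| ↔ |w i2| < |w i1|)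
    (t31 : |c| < |a| ↔ |w i3| < |w i1|)
    (t41 : |d| < |a| ↔ |w i4| < |w i1|)
    (t32 : |c| < |b| ↔ |w i3| < |w i2|)
    (t42 : |d| < |b| ↔ |w i4| < |w i2|)
    (t43 : |d| < |c| ↔ |w i4| < |w i3|) :
    ContainsPattern w [a, b, c, d] := by
  refine ⟨fun j => ![i1, i2, i3, i4] j, ?_, ?_, ?_, ?_⟩
  · intro j; fin_cases j <;> simp <;> omega
  · intro j l hjl; fin_cases j <;> fin_cases l <;> simp_all <;> omega
  · intro j; fin_cases j <;> simpa using ‹_›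
  · intro j l; fin_cases j <;> fin_cases l <;>
      simp_all [show ((3 : Fin 4) : ℕ) = 3 from rfl]

/-- If a signed permutation avoids the thirteen patterns,
then there are no corner positions `(p, q)` and `(p', q')` with `p' > p ≥ 1`
and `q > q' > 0`. -/
theorem no_corner_pair_A_A
    (w : Equiv.Perm ℤ) (hsp : IsSignedPerm w) (hW : ∃ n : ℕ, MemW w n)
    (havoid : ∀ π ∈ thetaPatterns, AvoidsPattern w π) :
    ¬ ∃ p q p' q' : ℤ, IsCornerPos w p q ∧ IsCornerPos w p' q' ∧
        1 ≤ p ∧ p < p' ∧ 0 < q' ∧ q' < q := by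
  rintro ⟨p, q, p', q', hc, hc', hp1, hpp', hq'0, hq'q⟩
  obtain ⟨-, ⟨hc1, hc2⟩, ⟨hc3, hc4⟩, -⟩ := hc
  obtain ⟨hp'1, ⟨hd1, hd2⟩, ⟨hd3, hd4⟩, -⟩ := hc'
  -- basic signed-permutation facts
  have hw0 : w 0 = 0 := by have h := hsp 0; rw [neg_zero] at h; omega
  -- w p ≤ -q
  have hwp : w p ≤ -q := by have h := hsp p; omega
  -- w (p'-1) ≥ 1 - q'
  have hwe : 1 - q' ≤ w (p' - 1) := by
    have h2 : w (-(p' - 1)) ≤ q' - 1 := by rwa [show -(p' - 1) = -p' + 1 by ring]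
    have h := hsp (p' - 1); omega
  -- B' := -(w⁻¹ q'), the position of the value -q'
  set B' : ℤ := -(w⁻¹ q') with hB'def
  have hwB' : w B' = -q' := by
    rw [hB'def, hsp (w⁻¹ q'), show w (w⁻¹ q') = q' from w.apply_symm_apply q']
  have hpB' : p' ≤ B' := by omega
  -- D := w⁻¹ (q-1), the position of the value q-1
  set D : ℤ := w⁻¹ (q - 1) with hDdef
  have hD : -p < D := hc3
  have hwD : w D = q - 1 := w.apply_symm_apply (q - 1)
  have hD0 : D ≠ 0 := by intro h; rw [h, hw0] at hwD; omega
  -- p < p' - 1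
  have hpe : p < p' - 1 := by
    by_contra h
    have he : p' - 1 = p := by omega
    rw [he] at hwe; omega
  -- q' < q - 1
  have hq'q1 : q' < q - 1 := by
    by_contra h
    have h1 : w (-D) = -q' := by rw [hsp D, hwD]; omega
    have h2 : B' = -D := w.injective (by rw [hwB', h1])
    omega
  -- injectivity facts about x := w (p'-1)
  have hxq' : w (p' - 1) ≠ q' := by
    intro h
    have h1 : w (-B') = q' := by rw [hsp B', hwB']; ring
    have h2 : p' - 1 = -B' := w.injective (by rw [h, h1])
    omega
  have hxwp : w (p' - 1) ≠ -(w p) := by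
    intro h
    have h1 : w (p' - 1) = w (-p) := by rw [hsp p]; omega
    have h2 : p' - 1 = -p := w.injective h1
    omega
  have hx0 : w (p' - 1) ≠ 0 := by
    intro h
    have h2 : p' - 1 = 0 := w.injective (by rw [h, hw0])
    omega
  -- absolute value facts
  have hAp : |w p| = -(w p) := abs_of_neg (by omega)
  have hAB' : |w B'| = q' := by rw [hwB', abs_neg]; exact abs_of_pos hq'0
  have hAD : |w D| = q - 1 := by rw [hwD]; exact abs_of_pos (by omega)
  -- the general [-3,2,-1] pattern occurrence
  have P4gen : ∀ m : ℤ, p < m → m < B' → q' < w m → w m < -(w p) → False := by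
    intro m hm1 hm2 hm3 hm4
    have hAm : |w m| = w m := abs_of_pos (by omega)
    exact havoid [-3, 2, -1] (by decide)
      (contains3 w (-3) 2 (-1) p m B' (by omega) hm1 hm2
        (by norm_num <;> omega) (by norm_num <;> omega) (by norm_num <;> omega)
        (by rw [hAp, hAm]; norm_num <;> omega)
        (by rw [hAp, hAB']; norm_num <;> omega)
        (by rw [hAm, hAB']; norm_num <;> omega)
        (by rw [hAp, hAm]; norm_num <;> omega)
        (by rw [hAp, hAB']; norm_num <;> omega)
        (by rw [hAm, hAB']; norm_num <;> omega))
  rcases lt_trichotomy D 0 with hDneg | hDz | hDpos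
  · -- CASE II : c := -D, 1 ≤ c < p, w c = -(q-1)
    have hwc : w (-D) = -(q - 1) := by rw [hsp D, hwD]
    have hAc : |w (-D)| = q - 1 := by rw [hwc, abs_neg]; exact abs_of_pos (by omega)
    rcases lt_trichotomy (w (p' - 1)) 0 with hx | hx | hx
    · -- x < 0 : pattern [-3,-4,-1,-2] at (-D, p, p'-1, B')
      have hAe : |w (p' - 1)| = -(w (p' - 1)) := abs_of_neg hx
      exact havoid [-3, -4, -1, -2] (by decide)
        (contains4 w (-3) (-4) (-1) (-2) (-D) p (p' - 1) B'
          (by omega) (by omega) (by omega) (by omega)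
          (by norm_num <;> omega) (by norm_num <;> omega)
          (by norm_num <;> omega) (by norm_num <;> omega)
          (by rw [hAc, hAp]; norm_num <;> omega)
          (by rw [hAc, hAe]; norm_num <;> omega)
          (by rw [hAc, hAB']; norm_num <;> omega)
          (by rw [hAp, hAe]; norm_num <;> omega)
          (by rw [hAp, hAB']; norm_num <;> omega)
          (by rw [hAe, hAB']; norm_num <;> omega)
          (by rw [hAc, hAp]; norm_num <;> omega)
          (by rw [hAc, hAe]; norm_num <;> omega)
          (by rw [hAc, hAB']; norm_num <;> omega)
          (by rw [hAp, hAe]; norm_num <;> omega)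
          (by rw [hAp, hAB']; norm_num <;> omega)
          (by rw [hAe, hAB']; norm_num <;> omega))
    · exact hx0 hx
    · have hAe : |w (p' - 1)| = w (p' - 1) := abs_of_pos hx
      rcases lt_trichotomy (w (p' - 1)) q' with hx1 | hx1 | hx1
      · -- 0 < x < q' : pattern [-3,-4,1,-2] at (-D, p, p'-1, B')
        exact havoid [-3, -4, 1, -2] (by decide)
          (contains4 w (-3) (-4) 1 (-2) (-D) p (p' - 1) B'
            (by omega) (by omega) (by omega) (by omega)
            (by norm_num <;> omega) (by norm_num <;> omega)
            (by norm_num <;> omega) (by norm_num <;> omega)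
            (by rw [hAc, hAp]; norm_num <;> omega)
            (by rw [hAc, hAe]; norm_num <;> omega)
            (by rw [hAc, hAB']; norm_num <;> omega)
            (by rw [hAp, hAe]; norm_num <;> omega)
            (by rw [hAp, hAB']; norm_num <;> omega)
            (by rw [hAe, hAB']; norm_num <;> omega)
            (by rw [hAc, hAp]; norm_num <;> omega)
            (by rw [hAc, hAe]; norm_num <;> omega)
            (by rw [hAc, hAB']; norm_num <;> omega)
            (by rw [hAp, hAe]; norm_num <;> omega)
            (by rw [hAp, hAB']; norm_num <;> omega)
            (by rw [hAe, hAB']; norm_num <;> omega))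
      · exact hxq' hx1
      · rcases lt_trichotomy (w (p' - 1)) (-(w p)) with hx2 | hx2 | hx2
        · exact P4gen (p' - 1) hpe (by omega) hx1 hx2
        · exact hxwp hx2
        · -- x > -w p : pattern [-2,-3,4,-1] at (-D, p, p'-1, B')
          exact havoid [-2, -3, 4, -1] (by decide)
            (contains4 w (-2) (-3) 4 (-1) (-D) p (p' - 1) B'
              (by omega) (by omega) (by omega) (by omega)
              (by norm_num <;> omega) (by norm_num <;> omega)
              (by norm_num <;> omega) (by norm_num <;> omega)
              (by rw [hAc, hAp]; norm_num <;> omega)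
              (by rw [hAc, hAe]; norm_num <;> omega)
              (by rw [hAc, hAB']; norm_num <;> omega)
              (by rw [hAp, hAe]; norm_num <;> omega)
              (by rw [hAp, hAB']; norm_num <;> omega)
              (by rw [hAe, hAB']; norm_num <;> omega)
              (by rw [hAc, hAp]; norm_num <;> omega)
              (by rw [hAc, hAe]; norm_num <;> omega)
              (by rw [hAc, hAB']; norm_num <;> omega)
              (by rw [hAp, hAe]; norm_num <;> omega)
              (by rw [hAp, hAB']; norm_num <;> omega)
              (by rw [hAe, hAB']; norm_num <;> omega))
  · exact hD0 hDz
  · -- CASE I : d := D ≥ 1, w D = q - 1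
    have hDp : D ≠ p := by intro h; rw [h] at hwD; omega
    have hDB' : D ≠ B' := by intro h; rw [h, hwB'] at hwD; omega
    rcases lt_trichotomy D p with hI | hI | hI
    · -- I.2 : D < p
      rcases lt_trichotomy (w (p' - 1)) 0 with hx | hx | hx
      · -- x < 0 : pattern [3,-4,-1,-2] at (D, p, p'-1, B')
        have hAe : |w (p' - 1)| = -(w (p' - 1)) := abs_of_neg hx
        exact havoid [3, -4, -1, -2] (by decide)
          (contains4 w 3 (-4) (-1) (-2) D p (p' - 1) B'
            (by omega) (by omega) (by omega) (by omega)
            (by norm_num <;> omega) (by norm_num <;> omega)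
            (by norm_num <;> omega) (by norm_num <;> omega)
            (by rw [hAD, hAp]; norm_num <;> omega)
            (by rw [hAD, hAe]; norm_num <;> omega)
            (by rw [hAD, hAB']; norm_num <;> omega)
            (by rw [hAp, hAe]; norm_num <;> omega)
            (by rw [hAp, hAB']; norm_num <;> omega)
            (by rw [hAe, hAB']; norm_num <;> omega)
            (by rw [hAD, hAp]; norm_num <;> omega)
            (by rw [hAD, hAe]; norm_num <;> omega)
            (by rw [hAD, hAB']; norm_num <;> omega)
            (by rw [hAp, hAe]; norm_num <;> omega)
            (by rw [hAp, hAB']; norm_num <;> omega)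
            (by rw [hAe, hAB']; norm_num <;> omega))
      · exact hx0 hx
      · have hAe : |w (p' - 1)| = w (p' - 1) := abs_of_pos hx
        rcases lt_trichotomy (w (p' - 1)) q' with hx1 | hx1 | hx1
        · -- 0 < x < q' : pattern [3,-4,1,-2] at (D, p, p'-1, B')
          exact havoid [3, -4, 1, -2] (by decide)
            (contains4 w 3 (-4) 1 (-2) D p (p' - 1) B'
              (by omega) (by omega) (by omega) (by omega)
              (by norm_num <;> omega) (by norm_num <;> omega)
              (by norm_num <;> omega) (by norm_num <;> omega)
              (by rw [hAD, hAp]; norm_num <;> omega)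
              (by rw [hAD, hAe]; norm_num <;> omega)
              (by rw [hAD, hAB']; norm_num <;> omega)
              (by rw [hAp, hAe]; norm_num <;> omega)
              (by rw [hAp, hAB']; norm_num <;> omega)
              (by rw [hAe, hAB']; norm_num <;> omega)
              (by rw [hAD, hAp]; norm_num <;> omega)
              (by rw [hAD, hAe]; norm_num <;> omega)
              (by rw [hAD, hAB']; norm_num <;> omega)
              (by rw [hAp, hAe]; norm_num <;> omega)
              (by rw [hAp, hAB']; norm_num <;> omega)
              (by rw [hAe, hAB']; norm_num <;> omega))
        · exact hxq' hx1
        · rcases lt_trichotomy (w (p' - 1)) (-(w p)) with hx2 | hx2 | hx2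
          · exact P4gen (p' - 1) hpe (by omega) hx1 hx2
          · exact hxwp hx2
          · -- x > -w p : pattern [2,-3,4,-1] at (D, p, p'-1, B')
            exact havoid [2, -3, 4, -1] (by decide)
              (contains4 w 2 (-3) 4 (-1) D p (p' - 1) B'
                (by omega) (by omega) (by omega) (by omega)
                (by norm_num <;> omega) (by norm_num <;> omega)
                (by norm_num <;> omega) (by norm_num <;> omega)
                (by rw [hAD, hAp]; norm_num <;> omega)
                (by rw [hAD, hAe]; norm_num <;> omega)
                (by rw [hAD, hAB']; norm_num <;> omega)
                (by rw [hAp, hAe]; norm_num <;> omega)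
                (by rw [hAp, hAB']; norm_num <;> omega)
                (by rw [hAe, hAB']; norm_num <;> omega)
                (by rw [hAD, hAp]; norm_num <;> omega)
                (by rw [hAD, hAe]; norm_num <;> omega)
                (by rw [hAD, hAB']; norm_num <;> omega)
                (by rw [hAp, hAe]; norm_num <;> omega)
                (by rw [hAp, hAB']; norm_num <;> omega)
                (by rw [hAe, hAB']; norm_num <;> omega))
    · exact hDp hI
    · -- p < D.  Split on D vs B'.
      rcases lt_trichotomy D B' with hJ | hJ | hJ
      · -- I.1 : p < D < B' : the [-3,2,-1] pattern at (p, D, B')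
        exact P4gen D hI hJ (by omega) (by omega)
      · exact hDB' hJ
      · -- I.3 : B' < D
        rcases lt_trichotomy (w (p' - 1)) 0 with hx | hx | hx
        · -- x < 0 : pattern [-4,-1,-2,3] at (p, p'-1, B', D)
          have hAe : |w (p' - 1)| = -(w (p' - 1)) := abs_of_neg hx
          exact havoid [-4, -1, -2, 3] (by decide)
            (contains4 w (-4) (-1) (-2) 3 p (p' - 1) B' D
              (by omega) (by omega) (by omega) (by omega)
              (by norm_num <;> omega) (by norm_num <;> omega)
              (by norm_num <;> omega) (by norm_num <;> omega)
              (by rw [hAp, hAe]; norm_num <;> omega)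
              (by rw [hAp, hAB']; norm_num <;> omega)
              (by rw [hAp, hAD]; norm_num <;> omega)
              (by rw [hAe, hAB']; norm_num <;> omega)
              (by rw [hAe, hAD]; norm_num <;> omega)
              (by rw [hAB', hAD]; norm_num <;> omega)
              (by rw [hAp, hAe]; norm_num <;> omega)
              (by rw [hAp, hAB']; norm_num <;> omega)
              (by rw [hAp, hAD]; norm_num <;> omega)
              (by rw [hAe, hAB']; norm_num <;> omega)
              (by rw [hAe, hAD]; norm_num <;> omega)
              (by rw [hAB', hAD]; norm_num <;> omega))
        · exact hx0 hx
        · have hAe : |w (p' - 1)| = w (p' - 1) := abs_of_pos hx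
          rcases lt_trichotomy (w (p' - 1)) q' with hx1 | hx1 | hx1
          · -- 0 < x < q' : pattern [-4,1,-2,3] at (p, p'-1, B', D)
            exact havoid [-4, 1, -2, 3] (by decide)
              (contains4 w (-4) 1 (-2) 3 p (p' - 1) B' D
                (by omega) (by omega) (by omega) (by omega)
                (by norm_num <;> omega) (by norm_num <;> omega)
                (by norm_num <;> omega) (by norm_num <;> omega)
                (by rw [hAp, hAe]; norm_num <;> omega)
                (by rw [hAp, hAB']; norm_num <;> omega)
                (by rw [hAp, hAD]; norm_num <;> omega)
                (by rw [hAe, hAB']; norm_num <;> omega)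
                (by rw [hAe, hAD]; norm_num <;> omega)
                (by rw [hAB', hAD]; norm_num <;> omega)
                (by rw [hAp, hAe]; norm_num <;> omega)
                (by rw [hAp, hAB']; norm_num <;> omega)
                (by rw [hAp, hAD]; norm_num <;> omega)
                (by rw [hAe, hAB']; norm_num <;> omega)
                (by rw [hAe, hAD]; norm_num <;> omega)
                (by rw [hAB', hAD]; norm_num <;> omega))
          · exact hxq' hx1
          · rcases lt_trichotomy (w (p' - 1)) (-(w p)) with hx2 | hx2 | hx2
            · exact P4gen (p' - 1) hpe (by omega) hx1 hx2
            · exact hxwp hx2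
            · -- x > -w p : pattern [-2,3,1] at (p, p'-1, D)
              exact havoid [-2, 3, 1] (by decide)
                (contains3 w (-2) 3 1 p (p' - 1) D
                  (by omega) (by omega) (by omega)
                  (by norm_num <;> omega) (by norm_num <;> omega)
                  (by norm_num <;> omega)
                  (by rw [hAp, hAe]; norm_num <;> omega)
                  (by rw [hAp, hAD]; norm_num <;> omega)
                  (by rw [hAe, hAD]; norm_num <;> omega)
                  (by rw [hAp, hAe]; norm_num <;> omega)
                  (by rw [hAp, hAD]; norm_num <;> omega)
                  (by rw [hAe, hAD]; norm_num <;> omega))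
end
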